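/- Let k, N ≥ 1 and let 0 = c_0 < c_1 < ⋯ < c_n = k; set C_t = {c_{t−1}+1, …, c_t}. For each t let π_t be a partition of C_t; let π be the partition of [k] defined by i ~π j iff i and j lie in the same C_t and i ~π_t j, and let τ be the partition of [k] whose classes are C_1, …, C_n. Let x = (x_{i,j}), i ∈ [k], j ∈ [N], be a family of elements of a unital (not necessarily commutative) ring. Then ∏_{t=1}^n St_{π_t}(x|_{C_t}) = Σ_{σ a partition of [k] with σ ∧ τ = π} St_σ(x), where the product is taken in increasing order of t and σ ∧ τ denotes the meet: i ~σ∧τ j iff i ~σ j and i ~τ j. -/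

import Mathlib

open scoped Classical

noncomputable section FreeStochasticMeasures

/-! ## Partitions of `Fin k` as setoids -/

instance setoidFinFinite (k : ℕ) : Finite (Setoid (Fin k)) :=
  Finite.of_injective (fun π : Setoid (Fin k) => (π.r : Fin k → Fin k → Prop))
    (fun _ _ hab => Setoid.ext fun x y => iff_of_eq (congrFun (congrFun hab x) y))

instance setoidFinFintype (k : ℕ) : Fintype (Setoid (Fin k)) := Fintype.ofFinite _

/-- The classes of a partition of `Fin k`, as a finset of finsets. -/
def classesF {k : ℕ} (π : Setoid (Fin k)) : Finset (Finset (Fin k)) :=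
  Finset.univ.image fun i => Finset.univ.filter fun j => π.r i j

/-- A partition `π` of `Fin k` is noncrossing: there are no `i < j < l < m` with
`i ~π l`, `j ~π m` and `¬ i ~π j`. -/
def IsNC {k : ℕ} (π : Setoid (Fin k)) : Prop :=
  ∀ i j l m : Fin k, i < j → j < l → l < m → π.r i l → π.r j m → π.r i j

/-- `B` is a class of the partition `π`. -/
def IsClass {k : ℕ} (π : Setoid (Fin k)) (B : Finset (Fin k)) : Prop :=
  B ∈ classesF π

/-- `B` is an inner class of `π`: it is covered by some other class. -/
def IsInnerClass {k : ℕ} (π : Setoid (Fin k)) (B : Finset (Fin k)) : Prop :=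
  IsClass π B ∧ ∃ B' : Finset (Fin k), IsClass π B' ∧ B' ≠ B ∧
    ∃ a ∈ B', ∃ b ∈ B', ∀ c ∈ B, a < c ∧ c < b

/-- `B` is an outer class of `π`: a class which is not inner. -/
def IsOuterClass {k : ℕ} (π : Setoid (Fin k)) (B : Finset (Fin k)) : Prop :=
  IsClass π B ∧ ¬ IsInnerClass π B

/-- `Bf` enumerates the finsets satisfying `P` (e.g. the outer classes of a partition),
listed in increasing order of minimal elements. -/
def ClassEnum {k o : ℕ} (P : Finset (Fin k) → Prop) (Bf : Fin o → Finset (Fin k)) : Prop :=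
  (∀ i, P (Bf i)) ∧ (∀ B, P B → ∃ i, Bf i = B) ∧
    ∀ i j : Fin o, i < j → ∃ a ∈ Bf i, ∀ b ∈ Bf j, a < b

/-- The closure of a class: all indices lying between two of its elements. -/
def closureF {k : ℕ} (B : Finset (Fin k)) : Finset (Fin k) :=
  Finset.univ.filter fun j => ∃ a ∈ B, ∃ b ∈ B, a ≤ j ∧ j ≤ b

/-- Restriction of a partition of `Fin k` to a subset `C`, transported to `Fin C.card`
along the unique order isomorphism. -/
def restrictS {k : ℕ} (π : Setoid (Fin k)) (C : Finset (Fin k)) : Setoid (Fin C.card) :=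
  Setoid.comap (fun i => (C.orderIsoOfFin rfl i).1) π

/-- `μ` is the Möbius function of the poset `NC(k)` of noncrossing partitions of `Fin k`:
determined by `μ σ σ = 1` and the vanishing of the sums over intervals. -/
def IsNCMobius (k : ℕ) (μ : Setoid (Fin k) → Setoid (Fin k) → ℤ) : Prop :=
  (∀ σ : Setoid (Fin k), IsNC σ → μ σ σ = 1) ∧
    ∀ σ π : Setoid (Fin k), IsNC σ → IsNC π → σ < π →
      (∑ ρ ∈ Finset.univ.filter (fun ρ : Setoid (Fin k) => IsNC ρ ∧ σ ≤ ρ ∧ ρ ≤ π), μ σ ρ) = 0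

/-- `μ` is the Möbius function of the lattice of all partitions of `Fin k`. -/
def IsPMobius (k : ℕ) (μ : Setoid (Fin k) → Setoid (Fin k) → ℤ) : Prop :=
  (∀ σ : Setoid (Fin k), μ σ σ = 1) ∧
    ∀ σ π : Setoid (Fin k), σ < π →
      (∑ ρ ∈ Finset.univ.filter (fun ρ : Setoid (Fin k) => σ ≤ ρ ∧ ρ ≤ π), μ σ ρ) = 0

/-! ## Partition-indexed sums in a ring -/

section RingSums

variable {R : Type*} [Ring R]

/-- `St_π(x)`: sum over all `v` inducing exactly the partition `π`. -/
def StSumR {k N : ℕ} (x : Fin k → Fin N → R) (π : Setoid (Fin k)) : R :=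
  ∑ v ∈ Finset.univ.filter (fun v : Fin k → Fin N => ∀ i j, v i = v j ↔ π.r i j),
    (List.ofFn fun i => x i (v i)).prod

/-- `Pr_π(x)`: sum over all `v` constant on the classes of `π`. -/
def PrSumR {k N : ℕ} (x : Fin k → Fin N → R) (π : Setoid (Fin k)) : R :=
  ∑ v ∈ Finset.univ.filter (fun v : Fin k → Fin N => ∀ i j, π.r i j → v i = v j),
    (List.ofFn fun i => x i (v i)).prod

/-- Restriction of the family `x` to the rows indexed by `C`, in increasing order. -/
def restrictT {k N : ℕ} (x : Fin k → Fin N → R) (C : Finset (Fin k)) :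
    Fin C.card → Fin N → R := fun i => x (C.orderIsoOfFin rfl i).1

end RingSums

/-! ## C*-probability spaces, states, free independence -/

variable {A : Type*} [NormedRing A] [StarRing A] [CStarRing A] [NormedAlgebra ℂ A]
  [StarModule ℂ A] [CompleteSpace A]

/-- `φ` is a state: unital and positive. -/
structure IsCState (φ : A →ₗ[ℂ] ℂ) : Prop where
  map_one : φ 1 = 1
  pos : ∀ a : A, 0 ≤ (φ (star a * a)).re ∧ (φ (star a * a)).im = 0

/-- `φ` is a faithful tracial state. -/
structure IsFaithfulTracialState (φ : A →ₗ[ℂ] ℂ) : Prop where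
  map_one : φ 1 = 1
  pos : ∀ a : A, 0 ≤ (φ (star a * a)).re ∧ (φ (star a * a)).im = 0
  tracial : ∀ a b : A, φ (a * b) = φ (b * a)
  faithful : ∀ a : A, φ (star a * a) = 0 → a = 0

/-- Free independence of a family of subsets of `A` with respect to `φ`: alternating products
of centered elements of the generated unital star subalgebras are centered. -/
def FreelyIndependent (φ : A →ₗ[ℂ] ℂ) {ι : Type*} (S : ι → Set A) : Prop :=
  ∀ (m : ℕ) (idx : Fin (m + 1) → ι) (a : Fin (m + 1) → A),
    (∀ t, a t ∈ StarAlgebra.adjoin ℂ (S (idx t))) →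
    (∀ t : Fin m, idx t.castSucc ≠ idx t.succ) →
    (∀ t, φ (a t) = 0) →
    φ (List.ofFn a).prod = 0

/-- Free independence of two sets. -/
def FreelyIndependentPair (φ : A →ₗ[ℂ] ℂ) (S T : Set A) : Prop :=
  FreelyIndependent φ (fun b : Bool => cond b S T)

/-- A standard semicircular element. -/
def IsStdSemicircular (φ : A →ₗ[ℂ] ℂ) (s : A) : Prop :=
  star s = s ∧ (∀ m : ℕ, φ (s ^ (2 * m + 1)) = 0) ∧
    ∀ m : ℕ, φ (s ^ (2 * m)) = (catalan m : ℂ)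

/-! ## Moments and free cumulants -/

/-- The moment of the subfamily of `a` indexed by `B`, in increasing order. -/
def Mom {k : ℕ} (φ : A →ₗ[ℂ] ℂ) (a : Fin k → A) (B : Finset (Fin k)) : ℂ :=
  φ ((B.sort (· ≤ ·)).map a).prod

/-- `M_π(a)`: product of the moments over the classes of `π`. -/
def MomPi {k : ℕ} (φ : A →ₗ[ℂ] ℂ) (a : Fin k → A) (π : Setoid (Fin k)) : ℂ :=
  ∏ B ∈ classesF π, Mom φ a B

/-- `R_π(a)`: the free cumulant functional, via Möbius inversion over `NC(k)`
(`μ` is the Möbius function of `NC(k)`). -/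
def Rpi {k : ℕ} (φ : A →ₗ[ℂ] ℂ) (μ : Setoid (Fin k) → Setoid (Fin k) → ℤ)
    (a : Fin k → A) (π : Setoid (Fin k)) : ℂ :=
  ∑ σ ∈ Finset.univ.filter (fun σ : Setoid (Fin k) => IsNC σ ∧ σ ≤ π),
    (μ σ π : ℂ) * MomPi φ a σ

/-- `R(a_1, …, a_k)`: the free cumulant for the one-class partition. -/
def Rfull {k : ℕ} (φ : A →ₗ[ℂ] ℂ) (μ : Setoid (Fin k) → Setoid (Fin k) → ℤ)
    (a : Fin k → A) : ℂ :=
  Rpi φ μ a ⊤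

/-- The subfamily of operators indexed by `B`, in increasing order. -/
def subArgs {k : ℕ} (a : Fin k → A) (B : Finset (Fin k)) : Fin B.card → A :=
  fun i => a (B.orderIsoOfFin rfl i).1

/-! ## Half-open subintervals of `[0,1)` and subdivisions -/

/-- A half-open interval `[lo, hi) ⊆ [0,1)`. -/
structure HIv : Type where
  lo : ℝ
  hi : ℝ
  lo_nonneg : 0 ≤ lo
  lo_le_hi : lo ≤ hi
  hi_le_one : hi ≤ 1

namespace HIv

/-- The length of a half-open interval. -/
def len (I : HIv) : ℝ := I.hi - I.lo

/-- A half-open interval as a set of reals. -/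
def set (I : HIv) : Set ℝ := Set.Ico I.lo I.hi

end HIv

/-- The interval `[0,1)`. -/
def unitIv : HIv := ⟨0, 1, le_refl 0, zero_le_one, le_refl 1⟩

/-- A subdivision of the half-open interval `I` into finitely many half-open intervals,
listed in increasing order, recorded by its strictly increasing sequence of cut points. -/
structure SubdivOf (I : HIv) : Type where
  n : ℕ
  c : Fin (n + 1) → ℝ
  mono : StrictMono c
  first : c 0 = I.lo
  last : c (Fin.last n) = I.hi

namespace SubdivOf

/-- The `j`-th interval of a subdivision. -/
def piece {I : HIv} (S : SubdivOf I) (j : Fin S.n) : HIv where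
  lo := S.c j.castSucc
  hi := S.c j.succ
  lo_nonneg := by
    have h0 : S.c 0 ≤ S.c j.castSucc := S.mono.monotone (Fin.zero_le _)
    have h1 := I.lo_nonneg
    rw [S.first] at h0; linarith
  lo_le_hi := le_of_lt (S.mono (Fin.castSucc_lt_succ : j.castSucc < j.succ))
  hi_le_one := by
    have h0 : S.c j.succ ≤ S.c (Fin.last S.n) := S.mono.monotone (Fin.le_last _)
    have h1 := I.hi_le_one
    rw [S.last] at h0; linarith

/-- The mesh of the subdivision is `< δ`: every piece has length `< δ`. -/
def MeshLT {I : HIv} (S : SubdivOf I) (δ : ℝ) : Prop :=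
  ∀ j : Fin S.n, (S.piece j).len < δ

end SubdivOf

/-- `L` is the operator-norm limit of `F` along the net of subdivisions of `I`
(as the mesh tends to `0`). -/
def IsSubdivLimit {I : HIv} (F : SubdivOf I → A) (L : A) : Prop :=
  ∀ ε : ℝ, 0 < ε → ∃ δ : ℝ, 0 < δ ∧ ∀ S : SubdivOf I, S.MeshLT δ → ‖F S - L‖ < ε

/-! ## Free stochastic measures -/

/-- A free stochastic measure on `(A, φ)`: a self-adjoint, uniformly bounded, additive,
stationary, continuous interval function with freely independent values on disjoint
intervals. -/
structure FSM (A : Type*) [NormedRing A] [StarRing A] [CStarRing A] [NormedAlgebra ℂ A]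
    [StarModule ℂ A] [CompleteSpace A] (φ : A →ₗ[ℂ] ℂ) : Type _ where
  val : HIv → A
  sa : ∀ I, star (val I) = val I
  bdd : ∃ C : ℝ, ∀ I, ‖val I‖ ≤ C
  add : ∀ I J K : HIv, I.hi = J.lo → K.lo = I.lo → K.hi = J.hi → val K = val I + val J
  free : ∀ {n : ℕ} (Iv : Fin n → HIv),
    (∀ i j, i ≠ j → Disjoint (Iv i).set (Iv j).set) →
    FreelyIndependent φ fun i => ({val (Iv i)} : Set A)
  stat : ∀ (m : ℕ) (I J : HIv), I.len = J.len → φ (val I ^ m) = φ (val J ^ m)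
  cont : ∀ (m : ℕ) (I : HIv) (ε : ℝ), 0 < ε → ∃ δ : ℝ, 0 < δ ∧
    ∀ J : HIv, |J.len - I.len| < δ → ‖φ (val J ^ m) - φ (val I ^ m)‖ < ε

/-- A `k`-tuple of free stochastic measures is consistent: joint free increments,
joint stationarity, and joint continuity. -/
def Consistent {k : ℕ} (φ : A →ₗ[ℂ] ℂ) (X : Fin k → FSM A φ) : Prop :=
  (∀ (n : ℕ) (u : Fin n → Fin k) (Iv : Fin n → HIv),
      (∀ i j, i ≠ j → Disjoint (Iv i).set (Iv j).set) →
      FreelyIndependent φ fun i => ({(X (u i)).val (Iv i)} : Set A)) ∧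
  (∀ (n : ℕ) (u : Fin n → Fin k) (I J : HIv), I.len = J.len →
      φ (List.ofFn fun i => (X (u i)).val I).prod
        = φ (List.ofFn fun i => (X (u i)).val J).prod) ∧
  (∀ (n : ℕ) (u : Fin n → Fin k) (I : HIv) (ε : ℝ), 0 < ε → ∃ δ : ℝ, 0 < δ ∧
      ∀ J : HIv, |J.len - I.len| < δ →
        ‖φ (List.ofFn fun i => (X (u i)).val J).prod
          - φ (List.ofFn fun i => (X (u i)).val I).prod‖ < ε)

/-! ## Riemann-type sums for stochastic measures -/

/-- `St_π(X, S)`: sum over multi-indices inducing exactly the partition `π`. -/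
def StSum {k : ℕ} (Xv : Fin k → HIv → A) (π : Setoid (Fin k)) {I : HIv}
    (S : SubdivOf I) : A :=
  ∑ v ∈ Finset.univ.filter (fun v : Fin k → Fin S.n => ∀ i j, v i = v j ↔ π.r i j),
    (List.ofFn fun i => Xv i (S.piece (v i))).prod

/-- `Pr_π(X, S)`: sum over multi-indices constant on the classes of `π`. -/
def PrSum {k : ℕ} (Xv : Fin k → HIv → A) (π : Setoid (Fin k)) {I : HIv}
    (S : SubdivOf I) : A :=
  ∑ v ∈ Finset.univ.filter (fun v : Fin k → Fin S.n => ∀ i j, π.r i j → v i = v j),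
    (List.ofFn fun i => Xv i (S.piece (v i))).prod

/-- The diagonal Riemann sum `Σ_j X^{(1)}(I_j) ⋯ X^{(k)}(I_j)`. -/
def diagSum {k : ℕ} (Xv : Fin k → HIv → A) {I : HIv} (S : SubdivOf I) : A :=
  ∑ j : Fin S.n, (List.ofFn fun i => Xv i (S.piece j)).prod

/-- The sub-tuple of interval functions indexed by `B`, in increasing order. -/
def subTupleV {k : ℕ} (Xv : Fin k → HIv → A) (B : Finset (Fin k)) :
    Fin B.card → HIv → A := fun i => Xv (B.orderIsoOfFin rfl i).1

/-- The alternating product `p Z_1 p Z_2 p ⋯ Z_k p`. -/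
def altProd {k : ℕ} (p : A) (Z : Fin k → A) : A :=
  p * (List.ofFn fun j => Z j * p).prod

/-- Lengths of the intersection `∩_{i ∈ G} I_i` of half-open intervals. -/
def interLen {n : ℕ} (Iv : Fin n → HIv) (G : Finset (Fin n)) : ℝ :=
  if h : G.Nonempty then
    max 0 ((G.inf' h fun i => (Iv i).hi) - (G.sup' h fun i => (Iv i).lo))
  else 0

/-- A free Poisson stochastic measure: all free cumulants of `Y(I)` equal `|I|`
(`μ` is a family of Möbius functions of the posets `NC(n)`). -/
def IsFreePoisson (φ : A →ₗ[ℂ] ℂ) (Y : FSM A φ)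
    (μ : (n : ℕ) → Setoid (Fin n) → Setoid (Fin n) → ℤ) : Prop :=
  ∀ n : ℕ, 1 ≤ n → ∀ I : HIv, Rfull φ (μ n) (fun _ : Fin n => Y.val I) = (I.len : ℂ)

end FreeStochasticMeasures

/-!
Expanding the product of the block sums (in order, without commuting factors) gives a sum over
tuples `(w_t)` with `ker w_t = π_t`. Since the blocks are consecutive intervals, gluing the
`w_t` into one `v : [k] → [N]` preserves the order of the factors, and the glued `v` are exactly
those with `ker v ∧ τ = π`. Grouping them by `σ = ker v` gives the right-hand side.
-/

open Finset

theorem Setoid.inf_eq_iff_of_le {α : Type*} {σ τ π : Setoid α} (h : π ≤ τ) :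
    σ ⊓ τ = π ↔ ∀ i j, τ i j → (σ i j ↔ π i j) := by
  refine ⟨fun he i j hτ => he ▸ (Setoid.inf_iff_and.trans (and_iff_left hτ)).symm,
    fun H => Setoid.ext fun i j => Setoid.inf_iff_and.trans ?_⟩
  exact ⟨fun ⟨hσ, hτ⟩ => (H i j hτ).1 hσ, fun hπ => ⟨(H i j (h hπ)).2 hπ, h hπ⟩⟩

theorem List.prod_ofFn_sum {R : Type*} [NonAssocSemiring R] :
    ∀ {n : ℕ} {δ : Fin n → Type*} (S : ∀ t, Finset (δ t)) (f : ∀ t, δ t → R),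
      (List.ofFn fun t => ∑ w ∈ S t, f t w).prod
        = ∑ g ∈ Fintype.piFinset S, (List.ofFn fun t => f t (g t)).prod
  | 0, _, _, _ => by simp
  | n + 1, δ, S, f => by
    rw [List.ofFn_succ, List.prod_cons, List.prod_ofFn_sum (fun t => S t.succ),
      Finset.sum_mul_sum, ← Finset.sum_product']
    refine Finset.sum_equiv (Fin.consEquiv δ) (fun p => ?_) (fun p _ => ?_)
    · simp [Fin.forall_fin_succ]
    · simp [List.ofFn_succ]

section StSumR

variable {R : Type*} [Ring R] {k N : ℕ} (x : Fin k → Fin N → R)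

theorem stSumR_eq_sum_filter_ker (σ : Setoid (Fin k)) :
    StSumR x σ = ∑ v ∈ univ.filter (fun v : Fin k → Fin N => Setoid.ker v = σ),
      (List.ofFn fun i => x i (v i)).prod := by
  refine Finset.sum_congr (Finset.filter_congr fun v _ => ?_) fun _ _ => rfl
  rw [Setoid.ext_iff]
  rfl

theorem sum_stSumR_filter_inf_eq (τ π : Setoid (Fin k)) :
    ∑ σ ∈ univ.filter (fun σ : Setoid (Fin k) => σ ⊓ τ = π), StSumR x σ
      = ∑ v ∈ univ.filter (fun v : Fin k → Fin N => Setoid.ker v ⊓ τ = π),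
          (List.ofFn fun i => x i (v i)).prod := by
  simp only [stSumR_eq_sum_filter_ker]
  rw [Finset.sum_fiberwise_eq_sum_filter univ _ Setoid.ker]
  simp only [mem_filter, mem_univ, true_and]

end StSumR

section Fiber

variable {k n : ℕ} (b : Fin k → Fin n)

def fiberEnum (t : Fin n) (j : Fin #(univ.filter fun i => b i = t)) : Fin k :=
  ((univ.filter fun i => b i = t).orderIsoOfFin rfl j).1

theorem apply_fiberEnum (t : Fin n) (j : Fin #(univ.filter fun i => b i = t)) :
    b (fiberEnum b t j) = t :=
  (mem_filter.1 ((univ.filter fun i => b i = t).orderIsoOfFin rfl j).2).2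

theorem fiberEnum_strictMono (t : Fin n) : StrictMono (fiberEnum b t) :=
  fun _ _ h => ((univ.filter fun i => b i = t).orderIsoOfFin rfl).strictMono h

def fiberSigmaEquiv : (Σ t, Fin #(univ.filter fun i => b i = t)) ≃ Fin k :=
  (Equiv.sigmaCongrRight fun t => ((univ.filter fun i => b i = t).orderIsoOfFin rfl).toEquiv.trans
    (Equiv.subtypeEquivRight fun i => by simp)).trans (Equiv.sigmaFiberEquiv b)

theorem fiberSigmaEquiv_apply (p : Σ t, Fin #(univ.filter fun i => b i = t)) :
    fiberSigmaEquiv b p = fiberEnum b p.1 p.2 := rfl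

theorem forall_fiber_iff_forall_fiberEnum (P : Fin k → Fin k → Prop) :
    (∀ i j, b i = b j → P i j) ↔ ∀ t a c, P (fiberEnum b t a) (fiberEnum b t c) := by
  refine ⟨fun h t a c => h _ _ (by rw [apply_fiberEnum b, apply_fiberEnum b]), fun h i j hij => ?_⟩
  obtain ⟨⟨t, a⟩, rfl⟩ := (fiberSigmaEquiv b).surjective i
  obtain ⟨⟨s, c⟩, rfl⟩ := (fiberSigmaEquiv b).surjective j
  simp only [fiberSigmaEquiv_apply, apply_fiberEnum] at hij ⊢
  subst hij
  exact h t a c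

def fiberwiseEquiv (α : Type*) : (Fin k → α) ≃ ∀ t, Fin #(univ.filter fun i => b i = t) → α :=
  ((fiberSigmaEquiv b).symm.arrowCongr (Equiv.refl α)).trans (Equiv.piCurry fun _ _ => α)

theorem fiberwiseEquiv_apply {α : Type*} (v : Fin k → α) :
    fiberwiseEquiv b α v = fun t j => v (fiberEnum b t j) := rfl

variable {b}

theorem finRange_eq_flatten_ofFn_fiberEnum (hb : Monotone b) :
    List.finRange k = (List.ofFn fun t => List.ofFn (fiberEnum b t)).flatten := by
  refine (List.pairwise_lt_finRange k).eq_of_mem_iff ?_ fun i => ?_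
  · refine List.pairwise_flatten.2 ⟨?_, List.pairwise_ofFn.2 fun s t hst => ?_⟩
    · simp only [List.mem_ofFn, forall_exists_index]
      rintro _ t rfl
      exact List.pairwise_ofFn.2 fun _ _ h => fiberEnum_strictMono b t h
    · simp only [List.mem_ofFn, forall_exists_index]
      rintro _ a rfl _ c rfl
      exact hb.reflect_lt (by rwa [apply_fiberEnum b, apply_fiberEnum b])
  · obtain ⟨⟨t, a⟩, rfl⟩ := (fiberSigmaEquiv b).surjective i
    simp only [List.mem_finRange, true_iff]
    exact List.mem_flatten.2 ⟨_, List.mem_ofFn.2 ⟨t, rfl⟩, List.mem_ofFn.2 ⟨a, rfl⟩⟩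

theorem prod_ofFn_eq_prod_ofFn_fiberEnum {M : Type*} [Monoid M] (hb : Monotone b)
    (F : Fin k → M) :
    (List.ofFn F).prod = (List.ofFn fun t => (List.ofFn fun j => F (fiberEnum b t j)).prod).prod := by
  rw [List.ofFn_eq_map, finRange_eq_flatten_ofFn_fiberEnum hb, List.map_flatten, List.prod_flatten,
    List.map_ofFn, List.map_ofFn]
  simp only [Function.comp_def, List.map_ofFn]

end Fiber

theorem prod_stsum_blocks_general
    {R : Type*} [Ring R] (k N n : ℕ)
    (b : Fin k → Fin n) (hmono : Monotone b)
    (π : Setoid (Fin k)) (hπτ : π ≤ Setoid.ker b)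
    (x : Fin k → Fin N → R) :
    (List.ofFn fun t : Fin n =>
        StSumR (restrictT x (Finset.univ.filter fun i => b i = t))
          (restrictS π (Finset.univ.filter fun i => b i = t))).prod
      = ∑ σ ∈ Finset.univ.filter
            (fun σ : Setoid (Fin k) => σ ⊓ Setoid.ker b = π),
          StSumR x σ := by
  rw [sum_stSumR_filter_inf_eq,
    Finset.filter_congr fun v _ => Setoid.inf_eq_iff_of_le (σ := Setoid.ker v) hπτ]
  -- each block sum unfolds definitionally to a sum indexed through `fiberEnum b t`
  refine (List.prod_ofFn_sum _ _).trans (Finset.sum_equiv (fiberwiseEquiv b (Fin N)) ?_ ?_).symm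
  · intro v
    simp only [mem_filter, mem_univ, true_and, Fintype.mem_piFinset, fiberwiseEquiv_apply]
    exact forall_fiber_iff_forall_fiberEnum b _
  · intro v _
    exact prod_ofFn_eq_prod_ofFn_fiberEnum hmono _

/-- For consecutive blocks `C_1, …, C_n` of `[k]` (encoded by a monotone surjection
`b : Fin k → Fin n`) and a partition `π` refining the block partition `τ = ker b`,
`∏_t St_{π_t}(x|_{C_t}) = Σ_{σ ∧ τ = π} St_σ(x)`. -/
theorem prod_stsum_blocks
    {R : Type*} [Ring R] (k N n : ℕ) (hk : 1 ≤ k) (hN : 1 ≤ N)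
    (b : Fin k → Fin n) (hmono : Monotone b) (hsurj : Function.Surjective b)
    (π : Setoid (Fin k)) (hπτ : π ≤ Setoid.ker b)
    (x : Fin k → Fin N → R) :
    (List.ofFn fun t : Fin n =>
        StSumR (restrictT x (Finset.univ.filter fun i => b i = t))
          (restrictS π (Finset.univ.filter fun i => b i = t))).prod
      = ∑ σ ∈ Finset.univ.filter
            (fun σ : Setoid (Fin k) => σ ⊓ Setoid.ker b = π),
          StSumR x σ :=
  prod_stsum_blocks_general k N n b hmono π hπτ x
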